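/- arXiv:1503.01220 — 4 statements merged into one kernel-verified Lean document; each statement's English description precedes it below -/
import Mathlib

section
/- For the star graph on n ≥ 2 vertices with central agent h, where every noncentral agent i has g_{ih} = 1 and the central agent satisfies Σ_i g_{hi} = 1 with g_{hi} = 1/(n-1) for each noncentral i, the centrality satisfies v_h = (1 + δ(n-1)/(2β))/(1 - (δ/(2β))²) and each noncentral agent has centrality v_l = (1 + δ/(2β(n-1)))/(1 - (δ/(2β))²), under 0 < δ < 2β. -/
/-!
Writing `c = δ / (2β)`, the centrality vector solves the fixed-point system `v = 𝟙 + c Gᵀ v`.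
On the star this system collapses: every leaf satisfies `v_l = 1 + c v_h / (n - 1)`, and
substituting into the equation of the center gives `(1 - c²) v_h = 1 + c (n - 1)`.
With `b = 0` instead of `1`, the same computation shows that `1 - c Gᵀ` has trivial kernel
whenever `c² ≠ 1`, so the inverse in the definition of `v` is a genuine one.
-/

open Matrix Finset

theorem Matrix.one_sub_smul_mulVec_eq_iff {ι R : Type*} [Fintype ι] [DecidableEq ι] [CommRing R]
    {A : Matrix ι ι R} {c : R} {x y : ι → R} :
    (1 - c • A) *ᵥ x = y ↔ ∀ i, x i = y i + c * (A *ᵥ x) i := by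
  rw [sub_mulVec, one_mulVec, smul_mulVec, funext_iff]
  exact forall_congr' fun i => sub_eq_iff_eq_add

structure IsDirectedStar {ι : Type*} [Fintype ι] (G : Matrix ι ι ℝ) (h : ι) : Prop where
  leaf_center : ∀ i, i ≠ h → G i h = 1
  center_leaf : ∀ i, i ≠ h → G h i = 1 / (Fintype.card ι - 1)
  leaf_leaf : ∀ i j, j ≠ h → i ≠ h → G i j = 0
  center_center : G h h = 0

namespace IsDirectedStar

variable {ι : Type*} [Fintype ι] [DecidableEq ι] {G : Matrix ι ι ℝ} {h : ι}

theorem transpose_mulVec_center (hG : IsDirectedStar G h) (x : ι → ℝ) :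
    (Gᵀ *ᵥ x) h = ∑ j ∈ univ.erase h, x j := by
  simp only [mulVec, dotProduct, transpose_apply]
  rw [← add_sum_erase _ _ (mem_univ h), hG.center_center, zero_mul, zero_add]
  exact sum_congr rfl fun j hj => by rw [hG.leaf_center j (ne_of_mem_erase hj), one_mul]

theorem transpose_mulVec_leaf (hG : IsDirectedStar G h) {i : ι} (hi : i ≠ h) (x : ι → ℝ) :
    (Gᵀ *ᵥ x) i = x h / (Fintype.card ι - 1) := by
  simp only [mulVec, dotProduct, transpose_apply]
  rw [← add_sum_erase _ _ (mem_univ h), hG.center_leaf i hi, one_div_mul_eq_div, add_eq_left]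
  exact sum_eq_zero fun j hj => by rw [hG.leaf_leaf j i hi (ne_of_mem_erase hj), zero_mul]

variable {c b : ℝ} {x : ι → ℝ}

theorem leaf_of_fixedPoint (hG : IsDirectedStar G h) (hx : ∀ i, x i = b + c * (Gᵀ *ᵥ x) i)
    {i : ι} (hi : i ≠ h) : x i = b + c * x h / (Fintype.card ι - 1) := by
  rw [hx i, hG.transpose_mulVec_leaf hi, mul_div_assoc]

theorem center_of_fixedPoint [Nontrivial ι] (hG : IsDirectedStar G h)
    (hx : ∀ i, x i = b + c * (Gᵀ *ᵥ x) i) :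
    (1 - c ^ 2) * x h = b * (1 + c * (Fintype.card ι - 1)) := by
  have hm : (Fintype.card ι : ℝ) - 1 ≠ 0 :=
    sub_ne_zero.mpr (by exact_mod_cast Fintype.one_lt_card.ne')
  have hleaves : ∑ j ∈ univ.erase h, x j = (Fintype.card ι - 1) * b + c * x h := by
    rw [sum_congr rfl fun j hj => hG.leaf_of_fixedPoint hx (ne_of_mem_erase hj), sum_const,
      card_erase_of_mem (mem_univ h), card_univ, nsmul_eq_mul, Nat.cast_pred Fintype.card_pos]
    field_simp
  have hcenter := hx h
  rw [hG.transpose_mulVec_center, hleaves] at hcenter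
  linear_combination hcenter

theorem center_eq_of_fixedPoint [Nontrivial ι] (hG : IsDirectedStar G h)
    (hx : ∀ i, x i = b + c * (Gᵀ *ᵥ x) i) (hc : c ^ 2 ≠ 1) :
    x h = b * (1 + c * (Fintype.card ι - 1)) / (1 - c ^ 2) :=
  eq_div_of_mul_eq (sub_ne_zero.mpr hc.symm) (by rw [mul_comm, hG.center_of_fixedPoint hx])

theorem leaf_eq_of_fixedPoint [Nontrivial ι] (hG : IsDirectedStar G h)
    (hx : ∀ i, x i = b + c * (Gᵀ *ᵥ x) i) (hc : c ^ 2 ≠ 1) {i : ι} (hi : i ≠ h) :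
    x i = b * (1 + c / (Fintype.card ι - 1)) / (1 - c ^ 2) := by
  have hm : (Fintype.card ι : ℝ) - 1 ≠ 0 :=
    sub_ne_zero.mpr (by exact_mod_cast Fintype.one_lt_card.ne')
  have hc' : 1 - c ^ 2 ≠ 0 := sub_ne_zero.mpr hc.symm
  rw [hG.leaf_of_fixedPoint hx hi, hG.center_eq_of_fixedPoint hx hc]
  field_simp
  ring

theorem isUnit_det_one_sub_smul_transpose [Nontrivial ι] (hG : IsDirectedStar G h)
    (hc : c ^ 2 ≠ 1) : IsUnit (1 - c • Gᵀ).det := by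
  refine isUnit_iff_ne_zero.mpr fun hdet => ?_
  obtain ⟨x, hx0, hx⟩ := exists_mulVec_eq_zero_iff.mpr hdet
  have hfix : ∀ i, x i = 0 + c * (Gᵀ *ᵥ x) i := one_sub_smul_mulVec_eq_iff.mp hx
  refine hx0 (funext fun i => ?_)
  by_cases hi : i = h
  · rw [hi, hG.center_eq_of_fixedPoint hfix hc, zero_mul, zero_div, Pi.zero_apply]
  · rw [hG.leaf_eq_of_fixedPoint hfix hc hi, zero_mul, zero_div, Pi.zero_apply]

theorem inv_mulVec_fixedPoint [Nontrivial ι] (hG : IsDirectedStar G h) (hc : c ^ 2 ≠ 1)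
    (y : ι → ℝ) :
    ∀ i, ((1 - c • Gᵀ)⁻¹ *ᵥ y) i = y i + c * (Gᵀ *ᵥ ((1 - c • Gᵀ)⁻¹ *ᵥ y)) i := by
  rw [← one_sub_smul_mulVec_eq_iff, mulVec_mulVec,
    mul_nonsing_inv _ (hG.isUnit_det_one_sub_smul_transpose hc), one_mulVec]

end IsDirectedStar

theorem star_graph_centrality (n : ℕ) (hn : 2 ≤ n) (G : Matrix (Fin n) (Fin n) ℝ) (δ β : ℝ)
    (h : Fin n)
    (hGcenter : ∀ i, i ≠ h → G i h = 1)
    (hGout : ∀ i, i ≠ h → G h i = 1 / (n - 1))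
    (hGzero : ∀ i j, j ≠ h → i ≠ h → G i j = 0)
    (hGdiag : ∀ i, G i i = 0)
    (hδ0 : 0 < δ) (hδβ : δ < 2 * β)
    (v : Fin n → ℝ)
    (hv : v = ((1 : Matrix (Fin n) (Fin n) ℝ) - δ • ((2 * β)⁻¹ • G)ᵀ)⁻¹ *ᵥ (fun _ => (1 : ℝ))) :
    v h = (1 + δ * (n - 1) / (2 * β)) / (1 - (δ / (2 * β)) ^ 2) ∧
      ∀ i, i ≠ h → v i = (1 + δ / (2 * β * (n - 1))) / (1 - (δ / (2 * β)) ^ 2) := by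
  have : Nontrivial (Fin n) := Fin.nontrivial_iff_two_le.mpr hn
  have hG : IsDirectedStar G h :=
    ⟨hGcenter, by simpa only [Fintype.card_fin] using hGout, hGzero, hGdiag h⟩
  have hβ : 0 < 2 * β := hδ0.trans hδβ
  have hc : (δ / (2 * β)) ^ 2 ≠ 1 :=
    (pow_lt_one₀ (div_pos hδ0 hβ).le ((div_lt_one hβ).mpr hδβ) two_ne_zero).ne
  have hfix : ∀ i, v i = 1 + δ / (2 * β) * (Gᵀ *ᵥ v) i := by
    rw [hv, transpose_smul, smul_smul, ← div_eq_mul_inv]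
    exact hG.inv_mulVec_fixedPoint hc _
  refine ⟨?_, fun i hi => ?_⟩
  · rw [hG.center_eq_of_fixedPoint hfix hc, Fintype.card_fin]
    ring
  · rw [hG.leaf_eq_of_fixedPoint hfix hc hi, Fintype.card_fin, one_mul, div_div]
end

section
/- For any row-stochastic n×n matrix G (n ≥ 2) with zero diagonal, and 0 < δ < 2β, every entry of the centrality vector v = (I - δ(G/(2β))ᵀ)⁻¹𝟙 is at most v_h^s := (1 + δ(n-1)/(2β))/(1 - (δ/(2β))²), the central-agent centrality of the star graph. -/
/-!
With `r = δ / (2β) < 1` the centrality vector is the fixed point `v = 𝟙 + r Gᵀ v`. Because `Gᵀ`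
preserves sums and nonnegativity, a maximum principle makes `1 - r Gᵀ` invertible and `v ≥ 0`, and
summing the fixed-point equation gives `∑ v = n / (1 - r)`. Agent `i` contributes at least
`r G i j v i` to each `v j`, `j ≠ i`, and these contributions add up to `r v i` since `G i i = 0`;
hence `∑ v ≥ (1 + r) v i + (n - 1)`, which rearranges to the star-center bound.
-/

open Matrix Finset

section RowStochastic

variable {ι : Type*} [Fintype ι] [DecidableEq ι] {G : Matrix ι ι ℝ} {r : ℝ}

lemma sum_vecMul_of_mem_rowStochastic (hG : G ∈ rowStochastic ℝ ι) (w : ι → ℝ) :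
    ∑ i, (w ᵥ* G) i = ∑ i, w i := by
  rw [← dotProduct_one, ← dotProduct_mulVec, one_vecMul_of_mem_rowStochastic hG, dotProduct_one]

/-- A discrete maximum principle: the negative part `u` of `w` satisfies `u ≤ r • (u ᵥ* G)`,
and `ᵥ* G` preserves the sum of a vector, so `∑ u ≤ r ∑ u` with `r < 1` forces `u = 0`. -/
lemma nonneg_of_smul_vecMul_le (hG : G ∈ rowStochastic ℝ ι) (hr0 : 0 ≤ r) (hr1 : r < 1)
    {w : ι → ℝ} (hw : ∀ i, r * (w ᵥ* G) i ≤ w i) : 0 ≤ w := by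
  set u : ι → ℝ := fun i => (w i)⁻
  have hu0 : ∀ i, 0 ≤ u i := fun i => negPart_nonneg _
  have hu : ∀ i, u i ≤ r * (u ᵥ* G) i := by
    intro i
    have hneg : -(w ᵥ* G) i ≤ (u ᵥ* G) i := by
      rw [← Pi.neg_apply, ← neg_vecMul]
      exact sum_le_sum fun j _ =>
        mul_le_mul_of_nonneg_right (neg_le_negPart _) (nonneg_of_mem_rowStochastic hG)
    refine sup_le ?_ (mul_nonneg hr0 (nonneg_vecMul_of_mem_rowStochastic hG hu0 i))
    nlinarith [hw i]
  have hsum : ∑ i, u i ≤ r * ∑ i, u i :=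
    calc ∑ i, u i ≤ ∑ i, r * (u ᵥ* G) i := sum_le_sum fun i _ => hu i
      _ = r * ∑ i, u i := by rw [← mul_sum, sum_vecMul_of_mem_rowStochastic hG]
  have hsum0 : ∑ i, u i = 0 := by nlinarith [sum_nonneg fun i (_ : i ∈ univ) => hu0 i]
  intro i
  exact negPart_eq_zero.1 ((sum_eq_zero_iff_of_nonneg fun i _ => hu0 i).1 hsum0 i (mem_univ i))

lemma det_one_sub_smul_transpose_ne_zero (hG : G ∈ rowStochastic ℝ ι) (hr0 : 0 ≤ r)
    (hr1 : r < 1) : (1 - r • Gᵀ).det ≠ 0 := by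
  intro hdet
  obtain ⟨w, hw0, hw⟩ := exists_mulVec_eq_zero_iff.2 hdet
  rw [sub_mulVec, one_mulVec, smul_mulVec, mulVec_transpose, sub_eq_zero] at hw
  have hw' : ∀ i, r * (w ᵥ* G) i ≤ w i := fun i => (congrFun hw i).ge
  have hnw : ∀ i, r * ((-w) ᵥ* G) i ≤ (-w) i := fun i => by
    simp only [neg_vecMul, Pi.neg_apply, mul_neg, congrFun hw i, Pi.smul_apply, smul_eq_mul,
      le_refl]
  exact hw0 (le_antisymm (neg_nonneg.1 (nonneg_of_smul_vecMul_le hG hr0 hr1 hnw))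
    (nonneg_of_smul_vecMul_le hG hr0 hr1 hw'))

lemma eq_one_add_smul_vecMul_of_eq_inv_mulVec (hG : G ∈ rowStochastic ℝ ι) (hr0 : 0 ≤ r)
    (hr1 : r < 1) {v : ι → ℝ} (hv : v = (1 - r • Gᵀ)⁻¹ *ᵥ 1) : v = 1 + r • (v ᵥ* G) := by
  have hunit : IsUnit (1 - r • Gᵀ).det :=
    isUnit_iff_ne_zero.2 (det_one_sub_smul_transpose_ne_zero hG hr0 hr1)
  have h : (1 - r • Gᵀ) *ᵥ v = 1 := by
    rw [hv, mulVec_mulVec, mul_nonsing_inv _ hunit, one_mulVec]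
  rw [sub_mulVec, one_mulVec, smul_mulVec, mulVec_transpose, sub_eq_iff_eq_add] at h
  exact h

lemma sum_eq_card_div_of_eq_one_add_smul_vecMul (hG : G ∈ rowStochastic ℝ ι) (hr1 : r ≠ 1)
    {v : ι → ℝ} (hv : v = 1 + r • (v ᵥ* G)) : ∑ i, v i = Fintype.card ι / (1 - r) := by
  have hsum : ∑ i, v i = Fintype.card ι + r * ∑ i, v i := by
    conv_lhs => rw [hv]
    simp only [Pi.add_apply, Pi.one_apply, Pi.smul_apply, smul_eq_mul, sum_add_distrib,
      ← mul_sum, sum_vecMul_of_mem_rowStochastic hG, sum_const, card_univ, nsmul_one]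
  rw [eq_div_iff (sub_ne_zero.2 hr1.symm)]
  linarith

lemma one_add_mul_add_card_sub_one_le_sum (hG : G ∈ rowStochastic ℝ ι)
    (hdiag : ∀ i, G i i = 0) (hr0 : 0 ≤ r) (hr1 : r < 1) {v : ι → ℝ}
    (hv : v = 1 + r • (v ᵥ* G)) (i : ι) :
    (1 + r) * v i + (Fintype.card ι - 1) ≤ ∑ j, v j := by
  have hvj : ∀ j, v j = 1 + r * (v ᵥ* G) j := fun j => congrFun hv j
  have hv0 : 0 ≤ v := nonneg_of_smul_vecMul_le hG hr0 hr1 fun j => by linarith [hvj j]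
  have hlow : ∀ j, 1 + r * (v i * G i j) ≤ v j := by
    intro j
    have hi : v i * G i j ≤ (v ᵥ* G) j :=
      single_le_sum (f := fun k => v k * G k j)
        (fun k _ => mul_nonneg (hv0 k) (nonneg_of_mem_rowStochastic hG)) (mem_univ i)
    rw [hvj j]
    gcongr
  have hrow : ∑ j ∈ univ.erase i, G i j = 1 := by
    rw [← sum_row_of_mem_rowStochastic hG i, ← add_sum_erase _ _ (mem_univ i), hdiag, zero_add]
  calc (1 + r) * v i + (Fintype.card ι - 1)
      = v i + ∑ j ∈ univ.erase i, (1 + r * (v i * G i j)) := by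
        rw [sum_add_distrib, ← mul_sum, ← mul_sum, hrow, sum_const, card_erase_of_mem (mem_univ _),
          card_univ, nsmul_one, Nat.cast_pred (Fintype.card_pos_iff.2 ⟨i⟩)]
        ring
    _ ≤ v i + ∑ j ∈ univ.erase i, v j := by gcongr with j; exact hlow j
    _ = ∑ j, v j := add_sum_erase _ _ (mem_univ i)

lemma le_of_eq_one_add_smul_vecMul (hG : G ∈ rowStochastic ℝ ι) (hdiag : ∀ i, G i i = 0)
    (hr0 : 0 ≤ r) (hr1 : r < 1) {v : ι → ℝ} (hv : v = 1 + r • (v ᵥ* G)) (i : ι) :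
    v i ≤ (1 + r * (Fintype.card ι - 1)) / (1 - r ^ 2) := by
  have hle := one_add_mul_add_card_sub_one_le_sum hG hdiag hr0 hr1 hv i
  rw [sum_eq_card_div_of_eq_one_add_smul_vecMul hG hr1.ne hv, le_div_iff₀ (by linarith)] at hle
  rw [le_div_iff₀ (by nlinarith)]
  nlinarith

end RowStochastic

theorem centrality_le_star_center_general (n : ℕ) (G : Matrix (Fin n) (Fin n) ℝ) (δ β : ℝ)
    (hG0 : ∀ i j, 0 ≤ G i j) (hGrow : ∀ i, ∑ j, G i j = 1) (hGdiag : ∀ i, G i i = 0)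
    (hδ0 : 0 < δ) (hδβ : δ < 2 * β)
    (v : Fin n → ℝ)
    (hv : v = ((1 : Matrix (Fin n) (Fin n) ℝ) - δ • ((2 * β)⁻¹ • G)ᵀ)⁻¹ *ᵥ (fun _ => (1 : ℝ))) :
    ∀ i, v i ≤ (1 + δ * (n - 1) / (2 * β)) / (1 - (δ / (2 * β)) ^ 2) := by
  have hβ : 0 < 2 * β := hδ0.trans hδβ
  have hG : G ∈ rowStochastic ℝ (Fin n) := mem_rowStochastic_iff_sum.2 ⟨hG0, hGrow⟩
  have hr0 : 0 ≤ δ / (2 * β) := (div_pos hδ0 hβ).le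
  have hr1 : δ / (2 * β) < 1 := (div_lt_one hβ).2 hδβ
  have hfix : v = 1 + (δ / (2 * β)) • (v ᵥ* G) := by
    refine eq_one_add_smul_vecMul_of_eq_inv_mulVec hG hr0 hr1 ?_
    rw [hv, transpose_smul, smul_smul, div_eq_mul_inv]
    rfl
  intro i
  simpa only [Fintype.card_fin, div_mul_eq_mul_div] using
    le_of_eq_one_add_smul_vecMul hG hGdiag hr0 hr1 hfix i

theorem centrality_le_star_center (n : ℕ) (hn : 2 ≤ n) (G : Matrix (Fin n) (Fin n) ℝ) (δ β : ℝ)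
    (hG0 : ∀ i j, 0 ≤ G i j) (hGrow : ∀ i, ∑ j, G i j = 1) (hGdiag : ∀ i, G i i = 0)
    (hδ0 : 0 < δ) (hδβ : δ < 2 * β)
    (v : Fin n → ℝ)
    (hv : v = ((1 : Matrix (Fin n) (Fin n) ℝ) - δ • ((2 * β)⁻¹ • G)ᵀ)⁻¹ *ᵥ (fun _ => (1 : ℝ))) :
    ∀ i, v i ≤ (1 + δ * (n - 1) / (2 * β)) / (1 - (δ / (2 * β)) ^ 2) :=
  centrality_le_star_center_general n G δ β hG0 hGrow hGdiag hδ0 hδβ v hv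
end

section
/- Consider the two-variable zero-sum game with payoffs U_a(q_a,q_b) = C₁ - c₂ q_a + λ(q_a - q_b)/(q_a + q_b) for firm a (maximizing over q_a > 0) and U_b(q_a,q_b) = C₁' - c₂ q_b + λ(q_b - q_a)/(q_a + q_b) for firm b (maximizing over q_b > 0), where λ, c₂ > 0. The unique interior critical point (satisfying ∂U_a/∂q_a = 0 and ∂U_b/∂q_b = 0) with the constants c₂ replaced by (c_q/c_s)v_k and (c_q/c_s)v_l respectively, is q_a* = 2λ(c_s/c_q)·v_l/(v_k + v_l)² and q_b* = 2λ(c_s/c_q)·v_k/(v_k + v_l)², where v_k, v_l > 0. -/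
/-!
With `k = c_q / c_s` and `S = q_a + q_b`, the conditions read `k v_k S² = 2λ q_b` and
`k v_l S² = 2λ q_a`. Adding them gives the total `k (v_k + v_l) S = 2λ`; feeding this back into
either one gives the ratio `v_k q_a = v_l q_b`, and the two together determine `q_a` and `q_b`.
-/

section FirstOrderSystem

variable {K : Type*} [Field K] {k c a b x y : K}

theorem neg_mul_add_div_eq_zero_iff {d : K} (hd : d ≠ 0) :
    -k * a + c / d = 0 ↔ k * a * d = c := by
  rw [neg_mul, neg_add_eq_zero, eq_div_iff hd]

theorem first_order_system_iff (hk : k ≠ 0) (hab : a + b ≠ 0) (hxy : x + y ≠ 0) :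
    (k * a * (x + y) ^ 2 = c * y ∧ k * b * (x + y) ^ 2 = c * x) ↔
      (x = c * k⁻¹ * (b / (a + b) ^ 2) ∧ y = c * k⁻¹ * (a / (a + b) ^ 2)) := by
  constructor
  · rintro ⟨hay, hbx⟩
    have htotal : k * (a + b) * (x + y) = c :=
      mul_right_cancel₀ hxy (by linear_combination hay + hbx)
    have hratio : a * x = b * y :=
      mul_left_cancel₀ (mul_ne_zero hk hxy) (by linear_combination x * htotal - hbx)
    constructor
    · field_simp
      linear_combination k * (a + b) * hratio + b * htotal
    · field_simp
      linear_combination -k * (a + b) * hratio + a * htotal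
  · rintro ⟨rfl, rfl⟩
    constructor <;> (field_simp; ring)

end FirstOrderSystem

theorem nash_first_order_condition_general (lam cs cq vk vl qa qb : ℝ)
    (hcs : 0 < cs) (hcq : 0 < cq) (hvk : 0 < vk) (hvl : 0 < vl)
    (hqa : 0 < qa) (hqb : 0 < qb) :
    (-(cq / cs) * vk + 2 * lam * qb / (qa + qb) ^ 2 = 0 ∧
      -(cq / cs) * vl + 2 * lam * qa / (qa + qb) ^ 2 = 0) ↔
    (qa = 2 * lam * (cs / cq) * (vl / (vk + vl) ^ 2) ∧
      qb = 2 * lam * (cs / cq) * (vk / (vk + vl) ^ 2)) := by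
  have hk : cq / cs ≠ 0 := by positivity
  have hS : qa + qb ≠ 0 := by positivity
  have hV : vk + vl ≠ 0 := by positivity
  have hS2 : (qa + qb) ^ 2 ≠ 0 := pow_ne_zero 2 hS
  rw [neg_mul_add_div_eq_zero_iff hS2, neg_mul_add_div_eq_zero_iff hS2,
    first_order_system_iff hk hV hS, inv_div]

theorem nash_first_order_condition (lam cs cq vk vl qa qb : ℝ)
    (hlam : 0 < lam) (hcs : 0 < cs) (hcq : 0 < cq) (hvk : 0 < vk) (hvl : 0 < vl)
    (hqa : 0 < qa) (hqb : 0 < qb) :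
    (-(cq / cs) * vk + 2 * lam * qb / (qa + qb) ^ 2 = 0 ∧
      -(cq / cs) * vl + 2 * lam * qa / (qa + qb) ^ 2 = 0) ↔
    (qa = 2 * lam * (cs / cq) * (vl / (vk + vl) ^ 2) ∧
      qb = 2 * lam * (cs / cq) * (vk / (vk + vl) ^ 2)) :=
  nash_first_order_condition_general lam cs cq vk vl qa qb hcs hcq hvk hvl hqa hqb
end

section
/- For n ≥ 2 and 0 < δ < 2β, the star-graph noncentral centrality v_l^s = (1 + δ/(2β(n-1)))/(1 - (δ/(2β))²) is strictly less than the balanced-graph centrality v̄ = 2β/(2β - δ), and v̄ is strictly less than the star central centrality v_h^s = (1 + δ(n-1)/(2β))/(1 - (δ/(2β))²). -/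
/-!
With `x = δ / (2β) ∈ (0, 1)` and `m = n - 1 > 1`, the balanced centrality is
`1 / (1 - x) = (1 + x) / (1 - x²)`, so all three centralities share the positive denominator
`1 - x²` and the inequalities reduce to `x / m < x < x m`.
-/

theorem one_add_div_one_sub_sq {K : Type*} [Field K] {x : K} (hx : 1 + x ≠ 0) :
    (1 + x) / (1 - x ^ 2) = 1 / (1 - x) := by
  rw [show 1 - x ^ 2 = (1 + x) * (1 - x) by ring, div_mul_cancel_left₀ hx, one_div]

theorem div_sub_eq_one_div_one_sub_div {K : Type*} [Field K] {a b : K} (ha : a ≠ 0) :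
    a / (a - b) = 1 / (1 - b / a) := by
  rw [one_sub_div ha, one_div_div]

theorem star_balanced_centrality_inequalities (n : ℕ) (hn : 3 ≤ n) (δ β : ℝ)
    (hδ0 : 0 < δ) (hδβ : δ < 2 * β) :
    (1 + δ / (2 * β * (n - 1))) / (1 - (δ / (2 * β)) ^ 2) < 2 * β / (2 * β - δ) ∧
    2 * β / (2 * β - δ) < (1 + δ * (n - 1) / (2 * β)) / (1 - (δ / (2 * β)) ^ 2) := by
  have hβ : 0 < 2 * β := hδ0.trans hδβ
  have hm : 1 < (n : ℝ) - 1 := by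
    have : (3 : ℝ) ≤ n := by exact_mod_cast hn
    linarith
  have hx0 : 0 < δ / (2 * β) := div_pos hδ0 hβ
  have hx1 : δ / (2 * β) < 1 := (div_lt_one hβ).mpr hδβ
  have hden : 0 < 1 - (δ / (2 * β)) ^ 2 := by nlinarith
  rw [div_sub_eq_one_div_one_sub_div hβ.ne', ← one_add_div_one_sub_sq (by linarith)]
  constructor
  · gcongr (1 + ?_) / _
    exact div_lt_div_of_pos_left hδ0 hβ (lt_mul_of_one_lt_right hβ hm)
  · gcongr (1 + ?_) / _
    exact div_lt_div_of_pos_right (lt_mul_of_one_lt_right hδ0 hm) hβ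
end
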